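/- Let d ∈ ℕ, ξ > 0 and C ≥ ξ. Let 𝒳 be a countable set and μ : 𝒳 → ℝ^d satisfy Σ_{x∈𝒳} ‖μ(x)‖₁ ≤ C. Let V ⊆ {v ∈ ℝ^d : ‖v‖_∞ ≤ 1} be a nonempty set such that ⟨v, μ(x)⟩ ≥ 0 for all v ∈ V and x ∈ 𝒳. Suppose T ∈ ℕ, subsets 𝒳 = B₁ ⊇ B₂ ⊇ ⋯ ⊇ B_{T+1}, and vectors v¹,…,v^{T+1} ∈ V satisfy: (i) for each t ∈ [T+1], v^t attains the supremum sup_{v∈V} Σ_{x∈B_t} ⟨v, μ(x)⟩; (ii) for each t ∈ [T], Σ_{x∈B_t} ⟨v^t, μ(x)⟩ ≥ ξ; (iii) for each t ∈ [T], B_{t+1} = B_t \ G_t where G_t := {x ∈ B_t : ⟨v^t, μ(x)⟩ ≥ (ξ/(2C))·‖μ(x)‖₁}; and (iv) Σ_{x∈B_{T+1}} ⟨v^{T+1}, μ(x)⟩ < ξ. Then: (a) T ≤ 2C/ξ; (b) for every v ∈ V, Σ_{x∈B_{T+1}} ⟨v, μ(x)⟩ < ξ; (c) for every x ∈ 𝒳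 \ B_{T+1} there is some t ∈ [T] such that ⟨v^t, μ(x)⟩ ≥ (ξ/(2C)) · ⟨v, μ(x)⟩ for every v ∈ V. -/

import Mathlib

noncomputable section

/-- The ℓ₁ norm of a vector in `ℝ^d`. -/
def l1norm {d : ℕ} (v : Fin d → ℝ) : ℝ := ∑ i, |v i|

/-- The standard inner product on `ℝ^d`. -/
def ip {d : ℕ} (u v : Fin d → ℝ) : ℝ := ∑ i, u i * v i

/-- `∑_{x ∈ B} ⟨v, μ(x)⟩`, as a `tsum` over the countable set `𝒳`. -/
def subSum {𝒳 : Type*} {d : ℕ} (μ : 𝒳 → Fin d → ℝ) (v : Fin d → ℝ) (B : Set 𝒳) : ℝ :=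
  ∑' x : 𝒳, B.indicator (fun y => ip v (μ y)) x

/-!
Each round of the greedy procedure removes `ℓ₁`-mass at least `ξ/2`: the chosen `vᵗ` has mass
`≥ ξ` on `B_t`, while on the surviving set `B_{t+1}` it is pointwise below `(ξ/2C)‖μ(x)‖₁`, so it
keeps mass at most `(ξ/2C)·C = ξ/2` there; the rest lies on `G_t`, where `⟨vᵗ, μ(x)⟩ ≤ ‖μ(x)‖₁`.
The removed sets `G_t` are pairwise disjoint, so the rounds together remove at most `C`, whence
`T·ξ/2 ≤ C`. A point outside `B_{T+1}` was removed in some round `t`, so it lies in `G_t`, where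
`(ξ/2C)⟨v, μ(x)⟩ ≤ (ξ/2C)‖μ(x)‖₁ ≤ ⟨vᵗ, μ(x)⟩`. The remaining claim is maximality of `v^{T+1}`.
-/

open Finset

lemma l1norm_nonneg {d : ℕ} (w : Fin d → ℝ) : 0 ≤ l1norm w :=
  sum_nonneg fun _ _ => abs_nonneg _

lemma abs_ip_le_l1norm {d : ℕ} {v : Fin d → ℝ} (hv : ∀ i, |v i| ≤ 1) (w : Fin d → ℝ) :
    |ip v w| ≤ l1norm w :=
  (abs_sum_le_sum_abs _ _).trans <| sum_le_sum fun i _ => by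
    rw [abs_mul]
    exact mul_le_of_le_one_left (abs_nonneg _) (hv i)

lemma ip_le_l1norm {d : ℕ} {v : Fin d → ℝ} (hv : ∀ i, |v i| ≤ 1) (w : Fin d → ℝ) :
    ip v w ≤ l1norm w :=
  (le_abs_self _).trans (abs_ip_le_l1norm hv w)

lemma sum_tsum_indicator_le_tsum {α ι : Type*} {f : α → ℝ} (hf : Summable f) (hf₀ : 0 ≤ f)
    {s : Finset ι} {G : ι → Set α} (hG : (s : Set ι).PairwiseDisjoint G) :
    ∑ i ∈ s, ∑' x, (G i).indicator f x ≤ ∑' x, f x := by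
  rw [← Summable.tsum_finsetSum fun i _ => hf.indicator (G i)]
  simp only [← Finset.indicator_biUnion_apply s G hG]
  exact (hf.indicator _).tsum_le_tsum (Set.indicator_le_self' fun x _ => hf₀ x) hf

section SdiffStep

variable {α : Type*} {B G : ℕ → Set α} {T : ℕ}

lemma subset_of_sdiff_step (hstep : ∀ t < T, B (t + 1) = B t \ G t) {s t : ℕ} (hst : s ≤ t)
    (htT : t ≤ T) : B t ⊆ B s := by
  induction t, hst using Nat.le_induction with
  | base => exact subset_rfl
  | succ t _ ih =>
    rw [hstep t htT]
    exact Set.sdiff_subset.trans (ih (Nat.le_of_succ_le htT))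

lemma pairwiseDisjoint_of_sdiff_step (hstep : ∀ t < T, B (t + 1) = B t \ G t)
    (hGB : ∀ t, G t ⊆ B t) : ((range T : Finset ℕ) : Set ℕ).PairwiseDisjoint G := by
  have disjoint_of_lt : ∀ s t, s < t → t < T → Disjoint (G s) (G t) := fun s t hst htT => by
    have hGt : G t ⊆ B s \ G s :=
      hstep s (hst.trans htT) ▸ (hGB t).trans (subset_of_sdiff_step hstep hst htT.le)
    exact Set.disjoint_sdiff_right.mono_right hGt
  intro s hs t ht hne
  simp only [coe_range, Set.mem_Iio] at hs ht
  rcases hne.lt_or_gt with hst | hts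
  · exact disjoint_of_lt s t hst ht
  · exact (disjoint_of_lt t s hts hs).symm

lemma exists_mem_of_sdiff_step (hstep : ∀ t < T, B (t + 1) = B t \ G t) {x : α} (h₀ : x ∈ B 0)
    (hT : x ∉ B T) : ∃ t < T, x ∈ G t := by
  induction T with
  | zero => exact absurd h₀ hT
  | succ T ih =>
    by_cases hx : x ∈ B T
    · rw [hstep T T.lt_succ_self] at hT
      exact ⟨T, T.lt_succ_self, by_contra fun hG => hT ⟨hx, hG⟩⟩
    · obtain ⟨t, ht, hxt⟩ := ih (fun t ht => hstep t (ht.trans T.lt_succ_self)) hx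
      exact ⟨t, ht.trans T.lt_succ_self, hxt⟩

end SdiffStep

section Mass

variable {𝒳 : Type*} {d : ℕ} {μ : 𝒳 → Fin d → ℝ} {v : Fin d → ℝ}

lemma summable_indicator_ip (hμ : Summable fun x => l1norm (μ x)) (hv : ∀ i, |v i| ≤ 1)
    (S : Set 𝒳) : Summable (S.indicator fun y => ip v (μ y)) :=
  hμ.of_norm_bounded fun x => by
    by_cases hx : x ∈ S
    · simpa [hx] using abs_ip_le_l1norm hv (μ x)
    · simpa [hx] using l1norm_nonneg (μ x)

lemma subSum_union (hμ : Summable fun x => l1norm (μ x)) (hv : ∀ i, |v i| ≤ 1) {S S' : Set 𝒳}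
    (h : Disjoint S S') : subSum μ v (S ∪ S') = subSum μ v S + subSum μ v S' := by
  rw [subSum, Set.indicator_union_of_disjoint h]
  exact (summable_indicator_ip hμ hv S).tsum_add (summable_indicator_ip hμ hv S')

lemma subSum_le_tsum_indicator_l1norm (hμ : Summable fun x => l1norm (μ x))
    (hv : ∀ i, |v i| ≤ 1) (S : Set 𝒳) :
    subSum μ v S ≤ ∑' x, S.indicator (fun y => l1norm (μ y)) x :=
  (summable_indicator_ip hμ hv S).tsum_le_tsum
    (fun _ => Set.indicator_le_indicator (ip_le_l1norm hv _)) (hμ.indicator S)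

/-- The paper's `G_t`, for `v = vᵗ`, `B = B_t` and `c = ξ/(2C)`. -/
def coveredSet (μ : 𝒳 → Fin d → ℝ) (c : ℝ) (v : Fin d → ℝ) (B : Set 𝒳) : Set 𝒳 :=
  {x ∈ B | c * l1norm (μ x) ≤ ip v (μ x)}

lemma coveredSet_subset (c : ℝ) (B : Set 𝒳) : coveredSet μ c v B ⊆ B := fun _ hx => hx.1

lemma subSum_sdiff_coveredSet_le (hμ : Summable fun x => l1norm (μ x)) (hv : ∀ i, |v i| ≤ 1)
    {c : ℝ} (hc : 0 ≤ c) (B : Set 𝒳) :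
    subSum μ v (B \ coveredSet μ c v B) ≤ c * ∑' x, l1norm (μ x) := by
  rw [← tsum_mul_left]
  refine (summable_indicator_ip hμ hv _).tsum_le_tsum (fun x => ?_) (hμ.mul_left c)
  by_cases hx : x ∈ B \ coveredSet μ c v B
  · rw [Set.indicator_of_mem hx]
    exact (not_le.mp fun h => hx.2 ⟨hx.1, h⟩).le
  · rw [Set.indicator_of_notMem hx]
    exact mul_nonneg hc (l1norm_nonneg _)

lemma sub_le_tsum_indicator_coveredSet (hμ : Summable fun x => l1norm (μ x)) {C : ℝ}
    (hμC : ∑' x, l1norm (μ x) ≤ C) (hv : ∀ i, |v i| ≤ 1) {c ξ : ℝ} (hc : 0 ≤ c) {B : Set 𝒳}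
    (hB : ξ ≤ subSum μ v B) :
    ξ - c * C ≤ ∑' x, (coveredSet μ c v B).indicator (fun y => l1norm (μ y)) x := by
  have hsplit : subSum μ v B =
      subSum μ v (coveredSet μ c v B) + subSum μ v (B \ coveredSet μ c v B) := by
    rw [← subSum_union hμ hv Set.disjoint_sdiff_right,
      Set.union_sdiff_cancel (coveredSet_subset c B)]
  have hcovered := subSum_le_tsum_indicator_l1norm hμ hv (coveredSet μ c v B)
  have hrest := (subSum_sdiff_coveredSet_le hμ hv hc B).trans (mul_le_mul_of_nonneg_left hμC hc)
  linarith

end Mass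

theorem stmt_1_general {𝒳 : Type*} {d : ℕ} (ξ C : ℝ) (hξ : 0 < ξ) (hC : ξ ≤ C)
    (μ : 𝒳 → Fin d → ℝ)
    (hμsum : Summable fun x => l1norm (μ x))
    (hμC : ∑' x, l1norm (μ x) ≤ C)
    (V : Set (Fin d → ℝ))
    (hVbdd : ∀ v ∈ V, ∀ i, |v i| ≤ 1)
    (T : ℕ) (B : ℕ → Set 𝒳) (v : ℕ → Fin d → ℝ)
    (hB0 : B 0 = Set.univ)
    (hvV : ∀ t ≤ T, v t ∈ V)
    (hvmax : ∀ t ≤ T, ∀ u ∈ V, subSum μ u (B t) ≤ subSum μ (v t) (B t))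
    (hlarge : ∀ t < T, ξ ≤ subSum μ (v t) (B t))
    (hstep : ∀ t < T,
      B (t + 1) = B t \ {x ∈ B t | ξ / (2 * C) * l1norm (μ x) ≤ ip (v t) (μ x)})
    (hstop : subSum μ (v T) (B T) < ξ) :
    (T : ℝ) ≤ 2 * C / ξ ∧
      (∀ u ∈ V, subSum μ u (B T) < ξ) ∧
      (∀ x ∈ Set.univ \ B T, ∃ t < T, ∀ u ∈ V,
        ξ / (2 * C) * ip u (μ x) ≤ ip (v t) (μ x)) := by
  have hCpos : 0 < C := hξ.trans_le hC
  have hc : 0 ≤ ξ / (2 * C) := by positivity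
  set G := fun t => coveredSet μ (ξ / (2 * C)) (v t) (B t)
  have hstep' : ∀ t < T, B (t + 1) = B t \ G t := hstep
  refine ⟨?_, fun u hu => (hvmax T le_rfl u hu).trans_lt hstop, fun x hx => ?_⟩
  · have hround : ∀ t ∈ range T, ξ / 2 ≤ ∑' x, (G t).indicator (fun y => l1norm (μ y)) x :=
      fun t ht => by
        have ht := mem_range.mp ht
        have h := sub_le_tsum_indicator_coveredSet hμsum hμC (hVbdd _ (hvV t ht.le)) hc
          (hlarge t ht)
        rwa [div_mul_eq_mul_div, mul_div_mul_right _ _ hCpos.ne', sub_half] at h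
    have hmass : (T : ℝ) * (ξ / 2) ≤ C := calc
      (T : ℝ) * (ξ / 2) = ∑ _t ∈ range T, ξ / 2 := by simp
      _ ≤ ∑ t ∈ range T, ∑' x, (G t).indicator (fun y => l1norm (μ y)) x := sum_le_sum hround
      _ ≤ ∑' x, l1norm (μ x) := sum_tsum_indicator_le_tsum hμsum (fun x => l1norm_nonneg _)
          (pairwiseDisjoint_of_sdiff_step hstep' fun t => coveredSet_subset _ _)
      _ ≤ C := hμC
    rw [le_div_iff₀ hξ]
    linarith
  · obtain ⟨t, ht, hxt⟩ := exists_mem_of_sdiff_step hstep' (hB0 ▸ Set.mem_univ x) hx.2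
    exact ⟨t, ht, fun u hu =>
      (mul_le_mul_of_nonneg_left (ip_le_l1norm (hVbdd u hu) _) hc).trans hxt.2⟩

/-- guarantees of the idealized greedy policy-cover construction
(`IdealGreedyCover`): the greedy procedure that repeatedly maximizes the mass of the
uncovered states `B_t` halts after `T ≤ 2C/ξ` rounds, every `v ∈ V` has mass `< ξ` on
the remaining set, and every removed point is `(ξ/2C)`-covered by some chosen `vᵗ`. -/
theorem stmt_1 {𝒳 : Type*} [Countable 𝒳] {d : ℕ} (ξ C : ℝ) (hξ : 0 < ξ) (hC : ξ ≤ C)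
    (μ : 𝒳 → Fin d → ℝ)
    (hμsum : Summable fun x => l1norm (μ x))
    (hμC : ∑' x, l1norm (μ x) ≤ C)
    (V : Set (Fin d → ℝ)) (hVne : V.Nonempty)
    (hVbdd : ∀ v ∈ V, ∀ i, |v i| ≤ 1)
    (hVpos : ∀ v ∈ V, ∀ x, 0 ≤ ip v (μ x))
    (T : ℕ) (B : ℕ → Set 𝒳) (v : ℕ → Fin d → ℝ)
    (hB0 : B 0 = Set.univ)
    (hvV : ∀ t ≤ T, v t ∈ V)
    (hvmax : ∀ t ≤ T, ∀ u ∈ V, subSum μ u (B t) ≤ subSum μ (v t) (B t))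
    (hlarge : ∀ t < T, ξ ≤ subSum μ (v t) (B t))
    (hstep : ∀ t < T,
      B (t + 1) = B t \ {x ∈ B t | ξ / (2 * C) * l1norm (μ x) ≤ ip (v t) (μ x)})
    (hstop : subSum μ (v T) (B T) < ξ) :
    (T : ℝ) ≤ 2 * C / ξ ∧
      (∀ u ∈ V, subSum μ u (B T) < ξ) ∧
      (∀ x ∈ Set.univ \ B T, ∃ t < T, ∀ u ∈ V,
        ξ / (2 * C) * ip u (μ x) ≤ ip (v t) (μ x)) :=
  stmt_1_general ξ C hξ hC μ hμsum hμC V hVbdd T B v hB0 hvV hvmax hlarge hstep hstop
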